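/- arXiv:math/0603730 — 7 statements merged into one kernel-verified Lean document; each statement's English description precedes it below -/
import Mathlib

section
/- For all A, B ∈ 𝔤₋₁ with A₁₀ = x and B₁₀ = y, the commutator [A,B] lies in 𝔤₋₂ and its (2,0)-entry equals x·conj(y) - conj(x)·y. Moreover the resulting skew-symmetric ℝ-bilinear map 𝔤₋₁ × 𝔤₋₁ → 𝔤₋₂ is nondegenerate: for every nonzero A ∈ 𝔤₋₁ there exists B ∈ 𝔤₋₁ with [A,B] ≠ 0. -/
open Matrix Complex

noncomputable section

/-- The 3×3 matrix J with J₀₂ = J₁₁ = J₂₀ = 1 and all other entries 0. -/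
def Jm : Matrix (Fin 3) (Fin 3) ℂ := !![0,0,1;0,1,0;1,0,0]

/-- The real Lie algebra 𝔤 = su(2,1) = {A : Aᴴ·J + J·A = 0, tr A = 0}. -/
def su21 : Set (Matrix (Fin 3) (Fin 3) ℂ) :=
  {A | Aᴴ * Jm + Jm * A = 0 ∧ A.trace = 0}

/-- 𝔤₋₂ = {A ∈ 𝔤 : all entries except possibly A₂₀ vanish}. -/
def gm2 : Set (Matrix (Fin 3) (Fin 3) ℂ) :=
  {A ∈ su21 | ∀ i j : Fin 3, ¬(i = 2 ∧ j = 0) → A i j = 0}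

/-- 𝔤₋₁ = {A ∈ 𝔤 : all entries except possibly A₁₀ and A₂₁ vanish}. -/
def gm1 : Set (Matrix (Fin 3) (Fin 3) ℂ) :=
  {A ∈ su21 | ∀ i j : Fin 3, ¬((i = 1 ∧ j = 0) ∨ (i = 2 ∧ j = 1)) → A i j = 0}

lemma gm1_eq (A : Matrix (Fin 3) (Fin 3) ℂ) (hA : A ∈ gm1) :
    A = !![0,0,0; A 1 0,0,0; 0, -(starRingEnd ℂ) (A 1 0), 0] := by
  obtain ⟨⟨h1, _⟩, h3⟩ := hA
  have e21 : A 2 1 = -(starRingEnd ℂ) (A 1 0) := by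
    have := congrFun (congrFun h1 0) 1
    simp [Matrix.mul_apply, Fin.sum_univ_three, Jm, conjTranspose_apply,
      Matrix.vecMul, dotProduct, Matrix.vecHead, Matrix.vecTail] at this
    linear_combination this
  have e00 := h3 0 0 (by decide)
  have e01 := h3 0 1 (by decide)
  have e02 := h3 0 2 (by decide)
  have e11 := h3 1 1 (by decide)
  have e12 := h3 1 2 (by decide)
  have e20 := h3 2 0 (by decide)
  have e22 := h3 2 2 (by decide)
  ext i j
  fin_cases i <;> fin_cases j <;>
    simp [e00, e01, e02, e11, e12, e20, e22, e21, Matrix.vecHead, Matrix.vecTail]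

lemma mk_mem_gm1 (x : ℂ) :
    (!![0,0,0; x,0,0; 0, -(starRingEnd ℂ) x, 0] : Matrix (Fin 3) (Fin 3) ℂ) ∈ gm1 := by
  refine ⟨⟨?_, ?_⟩, ?_⟩
  · ext i j
    fin_cases i <;> fin_cases j <;>
      simp [Matrix.mul_apply, Fin.sum_univ_three, Jm, conjTranspose_apply,
        Matrix.vecHead, Matrix.vecTail]
  · simp [Matrix.trace_fin_three, Matrix.vecHead, Matrix.vecTail]
  · intro i j h
    fin_cases i <;> fin_cases j <;> simp_all [Matrix.vecHead, Matrix.vecTail]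

/-- the bracket 𝔤₋₁ × 𝔤₋₁ → 𝔤₋₂: its explicit form and nondegeneracy. -/
theorem stmt3 :
    (∀ A ∈ gm1, ∀ B ∈ gm1,
      A * B - B * A ∈ gm2 ∧
      (A * B - B * A) 2 0 =
        A 1 0 * (starRingEnd ℂ) (B 1 0) - (starRingEnd ℂ) (A 1 0) * B 1 0) ∧
    (∀ A ∈ gm1, A ≠ 0 → ∃ B ∈ gm1, A * B - B * A ≠ 0) := by
  have key : ∀ (x y : ℂ),
      (!![0,0,0; x,0,0; 0, -(starRingEnd ℂ) x, 0] : Matrix (Fin 3) (Fin 3) ℂ) *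
        !![0,0,0; y,0,0; 0, -(starRingEnd ℂ) y, 0] -
      !![0,0,0; y,0,0; 0, -(starRingEnd ℂ) y, 0] *
        !![0,0,0; x,0,0; 0, -(starRingEnd ℂ) x, 0] =
      !![0,0,0; 0,0,0; x * (starRingEnd ℂ) y - (starRingEnd ℂ) x * y, 0, 0] := by
    intro x y
    ext i j
    fin_cases i <;> fin_cases j <;>
      simp [Matrix.mul_apply, Fin.sum_univ_three, Matrix.vecHead, Matrix.vecTail] <;> ring
  have mem2 : ∀ z : ℂ, (starRingEnd ℂ) z = -z →
      (!![0,0,0; 0,0,0; z, 0, 0] : Matrix (Fin 3) (Fin 3) ℂ) ∈ gm2 := by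
    intro z hz
    refine ⟨⟨?_, ?_⟩, ?_⟩
    · ext i j
      fin_cases i <;> fin_cases j <;>
        simp [Matrix.mul_apply, Fin.sum_univ_three, Jm, conjTranspose_apply, hz,
          Matrix.vecHead, Matrix.vecTail]
    · simp [Matrix.trace_fin_three, Matrix.vecHead, Matrix.vecTail]
    · intro i j h
      fin_cases i <;> fin_cases j <;> simp_all [Matrix.vecHead, Matrix.vecTail]
  constructor
  · intro A hA B hB
    rw [gm1_eq A hA, gm1_eq B hB, key]
    refine ⟨mem2 _ ?_, ?_⟩
    · simp only [map_sub, _root_.map_mul, Complex.conj_conj]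
      ring
    · simp [Matrix.vecHead, Matrix.vecTail]
  · intro A hA hA0
    obtain ⟨x, hxdef⟩ : ∃ x, A 1 0 = x := ⟨_, rfl⟩
    have hAe := gm1_eq A hA
    rw [hxdef] at hAe
    have hx : x ≠ 0 := by
      intro h
      apply hA0
      have hz : A = !![(0:ℂ),0,0;0,0,0;0,0,0] := by
        rw [hAe, h]
        norm_num
      rw [hz]
      ext i j
      fin_cases i <;> fin_cases j <;> simp [Matrix.vecHead, Matrix.vecTail]
    refine ⟨!![0,0,0; Complex.I * x,0,0; 0, -(starRingEnd ℂ) (Complex.I * x), 0],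
      mk_mem_gm1 _, ?_⟩
    rw [hAe, key]
    intro h
    have h20 := congrFun (congrFun h 2) 0
    simp only [Matrix.zero_apply] at h20
    rw [show (!![0,0,0; 0,0,0; x * (starRingEnd ℂ) (Complex.I * x) -
        (starRingEnd ℂ) x * (Complex.I * x), 0, 0] : Matrix (Fin 3) (Fin 3) ℂ) 2 0 =
        x * (starRingEnd ℂ) (Complex.I * x) - (starRingEnd ℂ) x * (Complex.I * x) by
      simp [Matrix.vecHead, Matrix.vecTail]] at h20
    rw [_root_.map_mul, Complex.conj_I] at h20
    have h2 : Complex.I * (x * (starRingEnd ℂ) x) = 0 := by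
      linear_combination (-(1:ℂ)/2) * h20
    rcases mul_eq_zero.mp h2 with h3 | h3
    · exact Complex.I_ne_zero h3
    · rw [Complex.mul_conj] at h3
      exact hx (Complex.normSq_eq_zero.mp (by exact_mod_cast h3))
end
end

section
/- For every λ > 0 and every nonzero z ∈ ℂ, the three matrices X(0,z), J_λ(X(0,z)), and the commutator [X(0,z), J_λ(X(0,z))] form a basis of 𝔨 as a real vector space. -/
open Matrix Complex

noncomputable section

/-- The real Lie algebra 𝔨 = su(2). -/
def su2 : Set (Matrix (Fin 2) (Fin 2) ℂ) :=
  {X | Xᴴ = -X ∧ X.trace = 0}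

/-- The element X(t,z) of su(2), with rows (i·t, -conj z) and (z, -i·t). -/
def Xk (t : ℝ) (z : ℂ) : Matrix (Fin 2) (Fin 2) ℂ :=
  !![Complex.I * t, -(starRingEnd ℂ) z; z, -(Complex.I * t)]

/-- The complex structure J_λ on H_e in terms of z = u+iv:
J_λ(X(0,u+iv)) = X(0, -(1/λ)·v + i·λ·u), so `Jl l z` is the new complex parameter. -/
def Jl (l : ℝ) (z : ℂ) : ℂ := ((-(z.im) / l : ℝ) : ℂ) + Complex.I * ((l * z.re : ℝ) : ℂ)

set_option maxHeartbeats 2000000 in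
/-- for λ > 0 and z ≠ 0, the matrices X(0,z), J_λ(X(0,z)) and their
commutator form a basis of 𝔨 = su(2) as a real vector space. -/
theorem stmt5 (l : ℝ) (hl : 0 < l) (z : ℂ) (hz : z ≠ 0) :
    (∀ a b c : ℝ,
      a • Xk 0 z + b • Xk 0 (Jl l z)
        + c • (Xk 0 z * Xk 0 (Jl l z) - Xk 0 (Jl l z) * Xk 0 z) = 0 →
      a = 0 ∧ b = 0 ∧ c = 0) ∧
    (∀ Y ∈ su2, ∃ a b c : ℝ,
      Y = a • Xk 0 z + b • Xk 0 (Jl l z)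
        + c • (Xk 0 z * Xk 0 (Jl l z) - Xk 0 (Jl l z) * Xk 0 z)) := by
  have hl0 : l ≠ 0 := ne_of_gt hl
  have hz2 : 0 < z.re ^ 2 + z.im ^ 2 := by
    have := Complex.normSq_pos.mpr hz
    simp [Complex.normSq_apply] at this
    nlinarith
  have hpos : 0 < z.im ^ 2 + l ^ 2 * z.re ^ 2 := by
    rcases eq_or_ne z.re 0 with h' | h'
    · have him : z.im ≠ 0 := by
        intro h''
        rw [h', h''] at hz2
        norm_num at hz2
      have h1 : 0 < z.im ^ 2 := by positivity
      nlinarith [sq_nonneg (l * z.re)]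
    · have h1 : 0 < z.re ^ 2 := by positivity
      nlinarith [sq_nonneg z.im, mul_pos (mul_pos hl hl) h1]
  constructor
  · intro a b c h
    have h10 := congrFun (congrFun h 1) 0
    have h00 := congrFun (congrFun h 0) 0
    simp [Xk, Jl, Matrix.mul_apply, Fin.sum_univ_two, Complex.ext_iff] at h10 h00
    obtain ⟨e1, e2⟩ := h10
    have e1' : a * z.re * l = b * z.im := by field_simp at e1; linarith
    have hb : b * (z.im ^ 2 + l ^ 2 * z.re ^ 2) = 0 := by
      linear_combination (-z.im) * e1' + (l * z.re) * e2
    have hb0 : b = 0 := by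
      rcases mul_eq_zero.mp hb with h' | h'
      · exact h'
      · nlinarith
    subst hb0
    have ha0 : a = 0 := by
      have ha : a * (z.re ^ 2 * l ^ 2 + z.im ^ 2) = 0 := by
        linear_combination (z.re * l) * e1' + z.im * e2
      rcases mul_eq_zero.mp ha with h' | h'
      · exact h'
      · nlinarith
    subst ha0
    refine ⟨rfl, rfl, ?_⟩
    rcases h00 with h' | h'
    · exact h'
    · exfalso
      have := h'.2
      field_simp at this
      nlinarith [mul_pos hl hl]
  · rintro Y ⟨hc, ht⟩
    have h00 := congrFun (congrFun hc 0) 0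
    have h01 := congrFun (congrFun hc 0) 1
    simp [Matrix.conjTranspose_apply, Complex.ext_iff] at h00 h01
    have htr : Y 0 0 + Y 1 1 = 0 := by
      simpa [Matrix.trace, Fin.sum_univ_two] using ht
    set t : ℝ := (Y 0 0).im with htdef
    set y : ℂ := Y 1 0 with hydef
    have hY00 : Y 0 0 = Complex.I * t := by
      rw [Complex.ext_iff]
      constructor <;> simp [htdef]
      linarith [h00]
    have hY11 : Y 1 1 = -(Complex.I * t) := by
      have h2 : Y 1 1 = -(Y 0 0) := by linear_combination htr
      rw [h2, hY00]
    have hY01 : Y 0 1 = -(starRingEnd ℂ) y := by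
      rw [Complex.ext_iff]
      constructor <;> simp [hydef]
      · linarith [h01.1]
      · linarith [h01.2]
    have hA : l ^ 2 * z.re ^ 2 + z.im ^ 2 ≠ 0 := by nlinarith [hpos]
    set a := (y.re * l ^ 2 * z.re + y.im * z.im) / (l ^ 2 * z.re ^ 2 + z.im ^ 2) with ha
    set b := l * (y.im * z.re - y.re * z.im) / (l ^ 2 * z.re ^ 2 + z.im ^ 2) with hb
    set c := -(t * l) / (2 * (l ^ 2 * z.re ^ 2 + z.im ^ 2)) with hcc
    refine ⟨a, b, c, ?_⟩
    ext i j
    fin_cases i <;> fin_cases j <;>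
      simp [Xk, Jl, Matrix.mul_apply, Fin.sum_univ_two, hY00, hY01, hY11, ← hydef,
        Complex.ext_iff]
    all_goals refine ⟨?_, ?_⟩
    all_goals try apply Or.inr
    all_goals try simp only [ha, hb, hcc]
    all_goals try field_simp
    all_goals ring
end
end

section
/- For every λ > 0 and all z, z' ∈ ℂ, κ_λ(X(0,z), X(0,z')) = 0; that is, the curvature map κ_λ vanishes identically on H_e × H_e. -/
open Matrix Complex

noncomputable section

/-- The matrix φ_λ(X(t,u+iv)) from Theorem 3.3 of the paper. -/
def phiE (l t u v : ℝ) : Matrix (Fin 3) (Fin 3) ℂ :=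
  !![(((1+l^2)/(4*l) : ℝ) : ℂ) * (Complex.I * t),
     -((((5-3*l^2)/(4*Real.sqrt l)) : ℝ) : ℂ) * u
       - ((((3-5*l^2)/(4*l*Real.sqrt l)) : ℝ) : ℂ) * (Complex.I * v),
     ((((-15+34*l^2-15*l^4)/(16*l^2)) : ℝ) : ℂ) * (Complex.I * t);
     ((Real.sqrt l : ℝ) : ℂ) * u + (((1/Real.sqrt l) : ℝ) : ℂ) * (Complex.I * v),
     -((((1+l^2)/(2*l)) : ℝ) : ℂ) * (Complex.I * t),
     ((((5-3*l^2)/(4*Real.sqrt l)) : ℝ) : ℂ) * u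
       - ((((3-5*l^2)/(4*l*Real.sqrt l)) : ℝ) : ℂ) * (Complex.I * v);
     Complex.I * t,
     -((Real.sqrt l : ℝ) : ℂ) * u + (((1/Real.sqrt l) : ℝ) : ℂ) * (Complex.I * v),
     (((1+l^2)/(4*l) : ℝ) : ℂ) * (Complex.I * t)]

/-- The ℝ-linear map φ_λ, written as a map on 2×2 matrices: for X ∈ su(2) we have
X = X(t,z) with t = (X₀₀).im and z = X₁₀, and φ_λ(X(t,u+iv)) = `phiE l t u v`. -/
def phiMap (l : ℝ) (X : Matrix (Fin 2) (Fin 2) ℂ) : Matrix (Fin 3) (Fin 3) ℂ :=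
  phiE l (X 0 0).im (X 1 0).re (X 1 0).im

/-- The curvature map κ_λ(X,Y) = [φ_λ(X), φ_λ(Y)] - φ_λ([X,Y]). -/
def kap (l : ℝ) (X Y : Matrix (Fin 2) (Fin 2) ℂ) : Matrix (Fin 3) (Fin 3) ℂ :=
  (phiMap l X * phiMap l Y - phiMap l Y * phiMap l X) - phiMap l (X * Y - Y * X)

set_option maxHeartbeats 1600000 in
lemma phiE_key (s : ℝ) (hs : 0 < s) (u v u' v' : ℝ) :
    phiE (s^2) 0 u v * phiE (s^2) 0 u' v' - phiE (s^2) 0 u' v' * phiE (s^2) 0 u v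
      - phiE (s^2) (2*(u'*v - v'*u)) 0 0 = 0 := by
  have hs0 : (s : ℂ) ≠ 0 := by exact_mod_cast hs.ne'
  ext i j
  fin_cases i <;> fin_cases j <;>
    · simp [phiE, Matrix.mul_apply, Fin.sum_univ_succ, Real.sqrt_sq hs.le]
      try push_cast
      try field_simp
      try ring_nf
      try field_simp
      try ring_nf
      try field_simp
      try ring

/-- κ_λ vanishes identically on H_e × H_e. -/
theorem stmt9 (l : ℝ) (hl : 0 < l) (z z' : ℂ) :
    kap l (Xk 0 z) (Xk 0 z') = 0 := by
  have h1 : phiMap l (Xk 0 z) = phiE l 0 z.re z.im := by simp [phiMap, Xk]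
  have h2 : phiMap l (Xk 0 z') = phiE l 0 z'.re z'.im := by simp [phiMap, Xk]
  have h3 : phiMap l (Xk 0 z * Xk 0 z' - Xk 0 z' * Xk 0 z)
      = phiE l (2*(z'.re*z.im - z'.im*z.re)) 0 0 := by
    have c10 : (Xk 0 z * Xk 0 z' - Xk 0 z' * Xk 0 z) 1 0 = 0 := by
      simp [Xk, Matrix.mul_apply, Fin.sum_univ_succ]
    have c00 : ((Xk 0 z * Xk 0 z' - Xk 0 z' * Xk 0 z) 0 0).im
        = 2*(z'.re*z.im - z'.im*z.re) := by
      simp [Xk, Matrix.mul_apply, Fin.sum_univ_succ, Complex.ext_iff]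
      ring
    unfold phiMap
    rw [c10, c00]
    simp
  rw [kap, h1, h2, h3]
  obtain ⟨s, hs, rfl⟩ : ∃ s : ℝ, 0 < s ∧ l = s^2 :=
    ⟨Real.sqrt l, Real.sqrt_pos.2 hl, (Real.sq_sqrt hl.le).symm⟩
  exact phiE_key s hs z.re z.im z'.re z'.im
end
end

section
/- For every λ > 0 and all t, u, v ∈ ℝ, the matrix κ_λ(X(t,0), X(0,u+iv)) has (0,1)-entry equal to -(3t(λ⁴-1)/(2λ²√λ))·(v - iλu), (1,2)-entry equal to (3t(λ⁴-1)/(2λ²√λ))·(v + iλu), and all other entries equal to 0. -/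
open Matrix Complex

noncomputable section

set_option maxHeartbeats 0 in
/-- the explicit formula for κ_λ(X(t,0), X(0,u+iv)). -/
theorem stmt10 (l : ℝ) (hl : 0 < l) (t u v : ℝ) :
    kap l (Xk t 0) (Xk 0 ((u : ℂ) + (v : ℂ) * Complex.I)) =
      !![0, -((((3*t*(l^4-1))/(2*l^2*Real.sqrt l) : ℝ)) : ℂ)
              * ((v : ℂ) - Complex.I * (l : ℂ) * (u : ℂ)), 0;
         0, 0, ((((3*t*(l^4-1))/(2*l^2*Real.sqrt l) : ℝ)) : ℂ)
              * ((v : ℂ) + Complex.I * (l : ℂ) * (u : ℂ));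
         0, 0, 0] := by
  obtain ⟨m, hm0, rfl⟩ : ∃ m : ℝ, 0 < m ∧ l = m ^ 2 :=
    ⟨Real.sqrt l, Real.sqrt_pos.mpr hl, (Real.sq_sqrt hl.le).symm⟩
  have hsq : Real.sqrt (m ^ 2) = m := Real.sqrt_sq hm0.le
  have hm : m ≠ 0 := hm0.ne'
  unfold kap phiMap Xk phiE
  rw [hsq]
  ext i j
  fin_cases i <;> fin_cases j <;>
  · simp [Matrix.mul_apply, Fin.sum_univ_succ, -Complex.ofReal_div, -Complex.ofReal_inv,
      -Complex.ofReal_pow, -Complex.ofReal_mul, -Complex.ofReal_sub, -Complex.ofReal_add,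
      -Complex.ofReal_neg, -Complex.ofReal_one, -Complex.ofReal_ofNat, -Complex.ofReal_zero,
      -Complex.ofReal_eq_zero]
    rw [Complex.ext_iff]
    constructor <;>
    · simp only [Matrix.vecHead, Matrix.vecTail, Function.comp_apply,
        Complex.mul_re, Complex.mul_im, Complex.add_re, Complex.add_im,
        Complex.sub_re, Complex.sub_im, Complex.neg_re, Complex.neg_im,
        Complex.I_re, Complex.I_im, Complex.ofReal_re, Complex.ofReal_im,
        Complex.zero_re, Complex.zero_im, mul_zero, zero_mul, mul_one, one_mul,
        add_zero, zero_add, neg_zero, sub_zero, zero_sub, neg_neg]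
      try field_simp
      try ring
end
end

section
/- For every λ > 0, all t, t' ∈ ℝ and all z, z' ∈ ℂ, κ_λ(X(t,z), X(t',z')) = κ_λ(X(t,0), X(0,z')) - κ_λ(X(t',0), X(0,z)); in particular κ_λ is completely determined by its values on pairs of the form (X(t,0), X(0,z)). -/
open Matrix Complex

noncomputable section

lemma phiMap_Xk (l t : ℝ) (z : ℂ) : phiMap l (Xk t z) = phiE l t z.re z.im := by
  simp [phiMap, Xk]

lemma bracket_Xk (t t' : ℝ) (z z' : ℂ) :
    Xk t z * Xk t' z' - Xk t' z' * Xk t z =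
      Xk (2*(z'.re*z.im - z'.im*z.re)) (2*Complex.I*(t'*z - t*z')) := by
  ext i j
  fin_cases i <;> fin_cases j <;>
    simp [Xk, Matrix.mul_apply, Fin.sum_univ_succ] <;>
    · apply Complex.ext <;> simp [Complex.ext_iff] <;> ring

lemma kap_Xk (l t t' : ℝ) (z z' : ℂ) :
    kap l (Xk t z) (Xk t' z') =
      (phiE l t z.re z.im * phiE l t' z'.re z'.im
        - phiE l t' z'.re z'.im * phiE l t z.re z.im)
      - phiE l (2*(z'.re*z.im - z'.im*z.re)) (2*(t*z'.im - t'*z.im))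
          (2*(t'*z.re - t*z'.re)) := by
  rw [kap, bracket_Xk, phiMap_Xk, phiMap_Xk, phiMap_Xk]
  congr 2 <;> simp [Complex.mul_re, Complex.mul_im] <;> ring



lemma phiE_add (l t1 u1 v1 t2 u2 v2 : ℝ) :
    phiE l (t1+t2) (u1+u2) (v1+v2) = phiE l t1 u1 v1 + phiE l t2 u2 v2 := by
  ext i j
  fin_cases i <;> fin_cases j <;> simp [phiE] <;> push_cast <;> ring

lemma phiE_neg (l t u v : ℝ) : phiE l (-t) (-u) (-v) = - phiE l t u v := by
  ext i j
  fin_cases i <;> fin_cases j <;> simp [phiE] <;> push_cast <;> ring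

lemma phiE_diag_comm (l t t' : ℝ) :
    phiE l t 0 0 * phiE l t' 0 0 = phiE l t' 0 0 * phiE l t 0 0 := by
  ext i j
  fin_cases i <;> fin_cases j <;>
    simp [phiE, Matrix.mul_apply, Fin.sum_univ_succ] <;> push_cast <;> ring

/-- Polynomial model of `16 s⁴ • phiE (s^2)`. -/
def Mp (s t u v : ℝ) : Matrix (Fin 3) (Fin 3) ℂ :=
  !![((4*s^2*(1+s^4) : ℝ) : ℂ) * (Complex.I * t),
     -((4*s^3*(5-3*s^4) : ℝ) : ℂ) * u - ((4*s*(3-5*s^4) : ℝ) : ℂ) * (Complex.I * v),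
     (((-15+34*s^4-15*s^8) : ℝ) : ℂ) * (Complex.I * t);
     ((16*s^5 : ℝ) : ℂ) * u + ((16*s^3 : ℝ) : ℂ) * (Complex.I * v),
     -((8*s^2*(1+s^4) : ℝ) : ℂ) * (Complex.I * t),
     ((4*s^3*(5-3*s^4) : ℝ) : ℂ) * u - ((4*s*(3-5*s^4) : ℝ) : ℂ) * (Complex.I * v);
     ((16*s^4 : ℝ) : ℂ) * (Complex.I * t),
     -((16*s^5 : ℝ) : ℂ) * u + ((16*s^3 : ℝ) : ℂ) * (Complex.I * v),
     ((4*s^2*(1+s^4) : ℝ) : ℂ) * (Complex.I * t)]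

set_option maxHeartbeats 800000 in
lemma phiE_sq (s : ℝ) (hs : 0 < s) (t u v : ℝ) :
    phiE (s^2) t u v = (((16*s^4 : ℝ) : ℂ))⁻¹ • Mp s t u v := by
  have hss : Real.sqrt (s^2) = s := Real.sqrt_sq hs.le
  have hs0 : (s : ℂ) ≠ 0 := by exact_mod_cast hs.ne'
  have ha : ((16*s^4 : ℝ) : ℂ) ≠ 0 := by
    simp only [ne_eq, Complex.ofReal_eq_zero]
    positivity
  rw [eq_inv_smul_iff₀ ha]
  ext i j
  fin_cases i <;> fin_cases j
  all_goals simp [phiE, Mp, hss, Matrix.smul_apply]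
  all_goals push_cast
  all_goals field_simp
  all_goals try ring
  all_goals try (simp only [inv_eq_one_div]; field_simp; ring)
  all_goals (
    have hc4 : ((s:ℂ)) ^ 4 * ((s:ℂ))⁻¹ ^ 4 = 1 := by
      rw [← mul_pow, mul_inv_cancel₀ hs0, one_pow]
    have hc16 : ((s:ℂ)) ^ 16 * ((s:ℂ))⁻¹ ^ 16 = 1 := by
      rw [← mul_pow, mul_inv_cancel₀ hs0, one_pow]
    first
      | linear_combination (-(↑s * Complex.I * ↑v * 12) - (↑s:ℂ) ^ 3 * ↑u * 20
          + (↑s:ℂ) ^ 5 * Complex.I * ↑v * 20 + (↑s:ℂ) ^ 7 * ↑u * 12) * hc4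
      | linear_combination (-(↑s * Complex.I * ↑v * 12) - (↑s:ℂ) ^ 3 * ↑u * 20
          + (↑s:ℂ) ^ 5 * Complex.I * ↑v * 20 + (↑s:ℂ) ^ 7 * ↑u * 12) * hc16
      | linear_combination (-(↑s * Complex.I * ↑v * 12) + (↑s:ℂ) ^ 3 * ↑u * 20
          + (↑s:ℂ) ^ 5 * Complex.I * ↑v * 20 - (↑s:ℂ) ^ 7 * ↑u * 12) * hc4
      | linear_combination (-(↑s * Complex.I * ↑v * 12) + (↑s:ℂ) ^ 3 * ↑u * 20
          + (↑s:ℂ) ^ 5 * Complex.I * ↑v * 20 - (↑s:ℂ) ^ 7 * ↑u * 12) * hc16)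

lemma Mp_off_bracket (s u v u' v' : ℝ) :
    Mp s 0 u v * Mp s 0 u' v' - Mp s 0 u' v' * Mp s 0 u v =
      ((16*s^4 : ℝ) : ℂ) • Mp s (2*(u'*v - v'*u)) 0 0 := by
  ext i j
  fin_cases i <;> fin_cases j <;>
    simp [Mp, Matrix.mul_apply, Fin.sum_univ_succ, Matrix.smul_apply] <;>
    push_cast <;> ring

lemma phiE_off_bracket (l : ℝ) (hl : 0 < l) (u v u' v' : ℝ) :
    phiE l 0 u v * phiE l 0 u' v' - phiE l 0 u' v' * phiE l 0 u v =
      phiE l (2*(u'*v - v'*u)) 0 0 := by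
  obtain ⟨s, hs', rfl⟩ : ∃ s : ℝ, 0 < s ∧ s^2 = l :=
    ⟨Real.sqrt l, Real.sqrt_pos.mpr hl, Real.sq_sqrt hl.le⟩
  have ha : ((16*s^4 : ℝ) : ℂ) ≠ 0 := by
    simp only [ne_eq, Complex.ofReal_eq_zero]
    positivity
  rw [phiE_sq s hs', phiE_sq s hs', phiE_sq s hs']
  simp only [smul_mul_assoc, mul_smul_comm, smul_smul, ← smul_sub]
  rw [Mp_off_bracket, smul_smul]
  congr 1
  field_simp

/-- κ_λ(X(t,z), X(t',z')) = κ_λ(X(t,0), X(0,z')) - κ_λ(X(t',0), X(0,z)). -/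
theorem stmt11 (l : ℝ) (hl : 0 < l) (t t' : ℝ) (z z' : ℂ) :
    kap l (Xk t z) (Xk t' z') =
      kap l (Xk t 0) (Xk 0 z') - kap l (Xk t' 0) (Xk 0 z) := by
  rw [kap_Xk, kap_Xk, kap_Xk]
  simp only [Complex.zero_re, Complex.zero_im]
  have h1 : phiE l t z.re z.im = phiE l t 0 0 + phiE l 0 z.re z.im := by
    rw [← phiE_add]; norm_num
  have h2 : phiE l t' z'.re z'.im = phiE l t' 0 0 + phiE l 0 z'.re z'.im := by
    rw [← phiE_add]; norm_num
  have h3 : phiE l (2*(z'.re*z.im - z'.im*z.re)) (2*(t*z'.im - t'*z.im))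
      (2*(t'*z.re - t*z'.re)) =
      phiE l (2*(z'.re*z.im - z'.im*z.re)) 0 0
      + phiE l 0 (2*(t*z'.im - 0*0)) (2*(0*0 - t*z'.re))
      + (- phiE l 0 (2*(t'*z.im - 0*0)) (2*(0*0 - t'*z.re))) := by
    rw [← phiE_neg, ← phiE_add, ← phiE_add]
    norm_num
    ring_nf
  have h4 : phiE l (2*(z'.re*0 - z'.im*0)) (2*(t*z'.im - 0*0)) (2*(0*0 - t*z'.re))
      = phiE l 0 (2*(t*z'.im - 0*0)) (2*(0*0 - t*z'.re)) := by norm_num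
  have h5 : phiE l (2*(z.re*0 - z.im*0)) (2*(t'*z.im - 0*0)) (2*(0*0 - t'*z.re))
      = phiE l 0 (2*(t'*z.im - 0*0)) (2*(0*0 - t'*z.re)) := by norm_num
  rw [h1, h2, h3, h4, h5]
  have hc := phiE_diag_comm l t t'
  have hb := phiE_off_bracket l hl z.re z.im z'.re z'.im
  have hb' : phiE l 0 z.re z.im * phiE l 0 z'.re z'.im =
      phiE l 0 z'.re z'.im * phiE l 0 z.re z.im
      + phiE l (2*(z'.re*z.im - z'.im*z.re)) 0 0 := by
    rw [← hb]; abel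
  simp only [add_mul, mul_add]
  rw [hb', hc]
  abel
end
end

section
/- For every λ > 0, the map κ_λ vanishes identically (i.e. κ_λ(X,Y) = 0 for all X, Y ∈ 𝔨) if and only if λ = 1; equivalently, the left invariant CR structure (H, J_λ) on SU(2) is spherical exactly for λ = 1. -/
/-!
Every element of su(2) is some X(t,z), and in these coordinates both brackets are explicit.
For λ = 1 the bracket relations show that φ₁ is a Lie algebra homomorphism, so κ₁ = 0.
For general λ the (0,1) entry of κ_λ(X(0,1), X(1,0)) equals 3(1 - λ⁴)/(2λ√λ)·i,
which vanishes for λ > 0 only at λ = 1.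
-/

open Matrix Complex

noncomputable section

lemma eq_Xk_of_mem_su2 {X : Matrix (Fin 2) (Fin 2) ℂ} (hX : X ∈ su2) :
    X = Xk (X 0 0).im (X 1 0) := by
  obtain ⟨hskew, htrace⟩ := hX
  have h00 : star (X 0 0) = -X 0 0 := by simpa using congrFun (congrFun hskew 0) 0
  have h01 : (starRingEnd ℂ) (X 1 0) = -X 0 1 := by simpa using congrFun (congrFun hskew 0) 1
  have h11 : X 1 1 = -X 0 0 := by
    simpa [Matrix.trace, Fin.sum_univ_succ, add_eq_zero_iff_eq_neg'] using htrace
  have hdiag : X 0 0 = Complex.I * (X 0 0).im := by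
    have hre : (X 0 0).re = 0 := by
      have := congrArg Complex.re h00
      simp only [Complex.star_def, Complex.conj_re, Complex.neg_re] at this
      linarith
    apply Complex.ext <;> simp [hre]
  ext i j
  fin_cases i <;> fin_cases j <;> simp [Xk, ← hdiag, h11]
  · linear_combination h01

lemma Xk_mem_su2 (t : ℝ) (z : ℂ) : Xk t z ∈ su2 := by
  constructor
  · ext i j
    fin_cases i <;> fin_cases j <;> simp [Xk]
  · simp [Xk, Matrix.trace, Fin.sum_univ_succ]

lemma Xk_commutator (t s : ℝ) (z w : ℂ) :
    Xk t z * Xk s w - Xk s w * Xk t z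
      = Xk (2 * (z.im * w.re - z.re * w.im)) (2 * Complex.I * (s * z - t * w)) := by
  ext i j
  fin_cases i <;> fin_cases j <;>
    · simp [Xk, Complex.ext_iff]
      constructor <;> ring

lemma phiE_one_commutator (t u v t' u' v' : ℝ) :
    phiE 1 t u v * phiE 1 t' u' v' - phiE 1 t' u' v' * phiE 1 t u v
      = phiE 1 (2 * (v * u' - u * v')) (2 * (t * v' - t' * v)) (2 * (t' * u - t * u')) := by
  ext i j
  fin_cases i <;> fin_cases j <;>
    · simp [phiE, Complex.ext_iff]
      constructor <;> ring

lemma kap_one_Xk (t s : ℝ) (z w : ℂ) : kap 1 (Xk t z) (Xk s w) = 0 := by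
  rw [kap, Xk_commutator, phiMap_Xk, phiMap_Xk, phiMap_Xk, phiE_one_commutator, sub_eq_zero]
  congr 1 <;> simp; ring

lemma kap_Xk_apply_zero_one {l : ℝ} (hl : 0 < l) :
    kap l (Xk 0 1) (Xk 1 0) 0 1 = (3 * (1 - l ^ 4) / (2 * l * √l) : ℝ) * Complex.I := by
  rw [kap, Xk_commutator, phiMap_Xk, phiMap_Xk, phiMap_Xk]
  have hsqrt : ((√l : ℝ) : ℂ) ^ 2 = l := by exact_mod_cast Real.sq_sqrt hl.le
  have hl0 : (l : ℂ) ≠ 0 := by exact_mod_cast hl.ne'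
  have hsqrt0 : ((√l : ℝ) : ℂ) ≠ 0 := by exact_mod_cast (Real.sqrt_pos.mpr hl).ne'
  simp [phiE]
  field_simp
  rw [hsqrt]
  ring

/-- κ_λ vanishes identically if and only if λ = 1. -/
theorem stmt12 (l : ℝ) (hl : 0 < l) :
    (∀ X ∈ su2, ∀ Y ∈ su2, kap l X Y = 0) ↔ l = 1 := by
  constructor
  · intro h
    have hentry := congrFun (congrFun (h _ (Xk_mem_su2 0 1) _ (Xk_mem_su2 1 0)) 0) 1
    rw [kap_Xk_apply_zero_one hl, Matrix.zero_apply, mul_eq_zero, Complex.ofReal_eq_zero,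
      div_eq_zero_iff] at hentry
    have hpow : l ^ 4 = 1 := by
      rcases hentry with (hnum | hden) | hI
      · linarith
      · exact absurd hden (by positivity)
      · exact absurd hI Complex.I_ne_zero
    exact (pow_eq_one_iff_of_nonneg hl.le four_ne_zero).mp hpow
  · rintro rfl X hX Y hY
    rw [eq_Xk_of_mem_su2 hX, eq_Xk_of_mem_su2 hY]
    exact kap_one_Xk _ _ _ _
end
end

section
/- For every nonzero E ∈ 𝔤₋₂, the map 𝔤₁ → 𝔤₋₁ sending Z to the commutator [E,Z] is an ℝ-linear isomorphism. -/
open Matrix Complex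

noncomputable section

/-- 𝔤₁ = {A ∈ 𝔤 : all entries except possibly A₀₁ and A₁₂ vanish}. -/
def g1s : Set (Matrix (Fin 3) (Fin 3) ℂ) :=
  {A ∈ su21 | ∀ i j : Fin 3, ¬((i = 0 ∧ j = 1) ∨ (i = 1 ∧ j = 2)) → A i j = 0}

lemma gm2_struct {E : Matrix (Fin 3) (Fin 3) ℂ} (hE : E ∈ gm2) :
    E = !![0,0,0;0,0,0;(E 2 0 : ℂ),0,0] ∧ starRingEnd ℂ (E 2 0) = - E 2 0 := by
  obtain ⟨⟨h1, _⟩, h2⟩ := hE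
  constructor
  · ext i j
    fin_cases i <;> fin_cases j <;> simp <;> exact h2 _ _ (by decide)
  · have := congrFun (congrFun h1 0) 0
    simp [Matrix.add_apply, Matrix.mul_apply, Fin.sum_univ_three, Jm,
      Matrix.conjTranspose_apply, Matrix.vecMul, dotProduct,
      Matrix.vecHead, Matrix.vecTail] at this
    linear_combination this

lemma g1s_struct {Z : Matrix (Fin 3) (Fin 3) ℂ} (hZ : Z ∈ g1s) :
    Z = !![0,(Z 0 1 : ℂ),0;0,0,Z 1 2;0,0,0] ∧
      Z 1 2 = - starRingEnd ℂ (Z 0 1) := by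
  obtain ⟨⟨h1, _⟩, h2⟩ := hZ
  constructor
  · ext i j
    fin_cases i <;> fin_cases j <;> simp <;> exact h2 _ _ (by decide)
  · have := congrFun (congrFun h1 1) 2
    simp [Matrix.add_apply, Matrix.mul_apply, Fin.sum_univ_three, Jm,
      Matrix.conjTranspose_apply, Matrix.vecMul, dotProduct,
      Matrix.vecHead, Matrix.vecTail,
      h2 1 0 (by decide), h2 2 0 (by decide), h2 1 1 (by decide)] at this
    linear_combination this

lemma gm1_struct {W : Matrix (Fin 3) (Fin 3) ℂ} (hW : W ∈ gm1) :
    W = !![0,0,0;(W 1 0 : ℂ),0,0;0,W 2 1,0] ∧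
      starRingEnd ℂ (W 1 0) = - W 2 1 := by
  obtain ⟨⟨h1, _⟩, h2⟩ := hW
  constructor
  · ext i j
    fin_cases i <;> fin_cases j <;> simp <;> exact h2 _ _ (by decide)
  · have := congrFun (congrFun h1 0) 1
    simp [Matrix.add_apply, Matrix.mul_apply, Fin.sum_univ_three, Jm,
      Matrix.conjTranspose_apply, Matrix.vecMul, dotProduct,
      Matrix.vecHead, Matrix.vecTail,
      h2 0 0 (by decide), h2 0 1 (by decide), h2 0 2 (by decide)] at this
    linear_combination this

lemma mem_g1s (z : ℂ) :
    (!![0,z,0;0,0,- starRingEnd ℂ z;0,0,0] : Matrix (Fin 3) (Fin 3) ℂ) ∈ g1s := by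
  refine ⟨⟨?_, ?_⟩, ?_⟩
  · ext i j
    fin_cases i <;> fin_cases j <;>
      simp [Matrix.add_apply, Matrix.mul_apply, Fin.sum_univ_three, Jm,
        Matrix.conjTranspose_apply, Matrix.vecMul, dotProduct,
        Matrix.vecHead, Matrix.vecTail]
  · simp [Matrix.trace_fin_three]
  · intro i j hij
    fin_cases i <;> fin_cases j <;>
      first
        | exact absurd (by decide) hij
        | simp [Matrix.vecHead, Matrix.vecTail]

lemma mem_gm1_img (e z : ℂ) :
    (!![0,0,0;starRingEnd ℂ z * e,0,0;0,e*z,0] : Matrix (Fin 3) (Fin 3) ℂ)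
      = !![0,0,0;0,0,0;(e:ℂ),0,0] * !![0,z,0;0,0,- starRingEnd ℂ z;0,0,0]
        - !![0,z,0;0,0,- starRingEnd ℂ z;0,0,0] * !![0,0,0;0,0,0;(e:ℂ),0,0] := by
  ext i j
  fin_cases i <;> fin_cases j <;>
    simp [Matrix.mul_apply, Fin.sum_univ_three, Matrix.vecHead, Matrix.vecTail]

lemma mem_gm1_of (e z : ℂ) (hec : starRingEnd ℂ e = -e) :
    (!![0,0,0;starRingEnd ℂ z * e,0,0;0,e*z,0] : Matrix (Fin 3) (Fin 3) ℂ) ∈ gm1 := by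
  refine ⟨⟨?_, ?_⟩, ?_⟩
  · ext i j
    fin_cases i <;> fin_cases j <;>
      simp [Matrix.add_apply, Matrix.mul_apply, Fin.sum_univ_three, Jm,
        Matrix.conjTranspose_apply, Matrix.vecMul, dotProduct,
        Matrix.vecHead, Matrix.vecTail, _root_.map_mul, hec] <;> ring
  · simp [Matrix.trace_fin_three, Matrix.vecHead, Matrix.vecTail]
  · intro i j hij
    fin_cases i <;> fin_cases j <;>
      first
        | exact absurd (by decide) hij
        | simp [Matrix.vecHead, Matrix.vecTail]

/-- for 0 ≠ E ∈ 𝔤₋₂, the map Z ↦ [E,Z] is an ℝ-linear isomorphism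
𝔤₁ → 𝔤₋₁. -/
theorem stmt14 (E : Matrix (Fin 3) (Fin 3) ℂ) (hE : E ∈ gm2) (hne : E ≠ 0) :
    (∀ Z ∈ g1s, E * Z - Z * E ∈ gm1) ∧
    (∀ (a : ℝ) (Z W : Matrix (Fin 3) (Fin 3) ℂ),
      E * (a • Z + W) - (a • Z + W) * E = a • (E * Z - Z * E) + (E * W - W * E)) ∧
    Set.InjOn (fun Z => E * Z - Z * E) g1s ∧
    Set.SurjOn (fun Z => E * Z - Z * E) g1s gm1 := by
  obtain ⟨hEe, hec⟩ := gm2_struct hE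
  have he : E 2 0 ≠ 0 := by
    intro h0
    apply hne
    rw [hEe, h0]
    ext i j
    fin_cases i <;> fin_cases j <;> simp [Matrix.vecHead, Matrix.vecTail]
  have key : ∀ Z ∈ g1s, E * Z - Z * E
      = !![0,0,0;starRingEnd ℂ (Z 0 1) * E 2 0,0,0;0,E 2 0 * Z 0 1,0] := by
    intro Z hZ
    obtain ⟨hZe, hzw⟩ := g1s_struct hZ
    rw [hzw] at hZe
    set e := E 2 0 with hee
    set z := Z 0 1 with hzz
    rw [hEe, hZe, ← mem_gm1_img]
  refine ⟨?_, ?_, ?_, ?_⟩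
  · intro Z hZ
    rw [key Z hZ]
    exact mem_gm1_of _ _ hec
  · intro a Z W
    rw [mul_add, add_mul, mul_smul_comm, smul_mul_assoc, smul_sub]
    abel
  · intro Z hZ Z' hZ' h
    simp only at h
    rw [key Z hZ, key Z' hZ'] at h
    have h21 := congrFun (congrFun h 2) 1
    simp [Matrix.vecHead, Matrix.vecTail] at h21
    have hzz : Z 0 1 = Z' 0 1 := by
      rcases h21 with h | h
      · exact h
      · exact absurd h he
    obtain ⟨hZe, hzw⟩ := g1s_struct hZ
    obtain ⟨hZ'e, hz'w⟩ := g1s_struct hZ'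
    rw [hZe, hZ'e, hzw, hz'w, hzz]
  · intro W hW
    obtain ⟨hWe, hwc⟩ := gm1_struct hW
    have hv : starRingEnd ℂ (W 2 1) = - W 1 0 := by
      have := congrArg (starRingEnd ℂ) hwc
      simp at this
      linear_combination this
    set z : ℂ := W 2 1 / E 2 0 with hz
    refine ⟨!![0,z,0;0,0,- starRingEnd ℂ z;0,0,0], mem_g1s z, ?_⟩
    simp only
    rw [key _ (mem_g1s z)]
    have e1 : starRingEnd ℂ z * E 2 0 = W 1 0 := by
      rw [hz, map_div₀, hv, hec, neg_div_neg_eq, div_mul_cancel₀ _ he]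
    have e2 : E 2 0 * z = W 2 1 := by
      rw [hz, mul_div_cancel₀ _ he]
    have hz01 : (!![0,z,0;0,0,- starRingEnd ℂ z;0,0,0] : Matrix (Fin 3) (Fin 3) ℂ) 0 1 = z := by
      simp
    rw [hz01, e1, e2, ← hWe]
end
end
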